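/- arXiv:2009.10041 — 3 statements merged into one kernel-verified Lean document; each statement's English description precedes it below -/
import Mathlib

section
/- Let M be a monad on a category C. Suppose C has coequalizers of reflexive pairs and the underlying endofunctor of M preserves them. Then the Eilenberg–Moore category Alg(M) of M-algebras has coequalizers of reflexive pairs, and the forgetful functor U^M : Alg(M) ⥤ C preserves them. -/
/-! The forgetful functor `U : Alg(M) ⥤ C` creates the colimit of a diagram `K` of algebras
as soon as `M` preserves the colimits of `U ∘ K` and `M ∘ U ∘ K`. For a reflexive pair of
algebra maps, the underlying pair in `C` and its image under `M` are again reflexive, so `M`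
preserves their coequalizers; hence the coequalizer in `C` lifts to `Alg(M)` and is preserved
by the forgetful functor. -/

open CategoryTheory CategoryTheory.Limits

universe v u

variable {C : Type u} [Category.{v} C]

namespace CategoryTheory

theorem IsReflexivePair.map {D : Type*} [Category D] (F : C ⥤ D) {A B : C} (f g : A ⟶ B)
    [IsReflexivePair f g] : IsReflexivePair (F.map f) (F.map g) :=
  IsReflexivePair.mk' (F.map (commonSection f g))
    (by rw [← F.map_comp, section_comp_left, F.map_id])
    (by rw [← F.map_comp, section_comp_right, F.map_id])

namespace Limits

variable (K : WalkingParallelPair ⥤ C)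

theorem hasColimit_of_isReflexivePair [HasReflexiveCoequalizers C]
    (_ : IsReflexivePair (K.map .left) (K.map .right)) : HasColimit K :=
  hasColimit_of_iso (diagramIsoParallelPair K)

theorem preservesColimit_of_isReflexivePair (_ : IsReflexivePair (K.map .left) (K.map .right))
    {D : Type*} [Category D] (G : C ⥤ D) [Monad.PreservesColimitOfIsReflexivePair G] :
    PreservesColimit K G :=
  preservesColimit_of_iso_diagram G (diagramIsoParallelPair K).symm

end Limits

namespace Monad

variable (M : Monad C) [PreservesColimitOfIsReflexivePair M.toFunctor]

noncomputable instance forgetCreatesColimitOfIsReflexivePair {X Y : M.Algebra}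
    (f g : X ⟶ Y) [IsReflexivePair f g] : CreatesColimit (parallelPair f g) M.forget :=
  have := preservesColimit_of_isReflexivePair (parallelPair f g ⋙ M.forget)
    (IsReflexivePair.map M.forget f g) M.toFunctor
  have := preservesColimit_of_isReflexivePair ((parallelPair f g ⋙ M.forget) ⋙ M.toFunctor)
    (IsReflexivePair.map (M.forget ⋙ M.toFunctor) f g) M.toFunctor
  forgetCreatesColimit _

variable [HasReflexiveCoequalizers C]

theorem hasReflexiveCoequalizers_algebra : HasReflexiveCoequalizers M.Algebra where
  has_coeq _ _ f g _ :=
    have := hasColimit_of_isReflexivePair (parallelPair f g ⋙ M.forget)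
      (IsReflexivePair.map M.forget f g)
    hasColimit_of_created _ M.forget

theorem preservesColimitOfIsReflexivePair_forget : PreservesColimitOfIsReflexivePair M.forget where
  out _ _ f g _ :=
    have := hasColimit_of_isReflexivePair (parallelPair f g ⋙ M.forget)
      (IsReflexivePair.map M.forget f g)
    preservesColimit_of_createsColimit_and_hasColimit _ M.forget

end Monad

end CategoryTheory

/-- if `C` has coequalizers of reflexive pairs and the monad `M` preserves
them, then the Eilenberg-Moore category of `M`-algebras has coequalizers of reflexive
pairs and the forgetful functor preserves them. -/
theorem algebra_hasReflexiveCoequalizers (M : Monad C) [HasReflexiveCoequalizers C]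
    (hM : ∀ ⦃A B : C⦄ (f g : A ⟶ B), IsReflexivePair f g →
      PreservesColimit (parallelPair f g) (M : C ⥤ C)) :
    HasReflexiveCoequalizers M.Algebra ∧
      ∀ ⦃X Y : M.Algebra⦄ (f g : X ⟶ Y), IsReflexivePair f g →
        PreservesColimit (parallelPair f g) M.forget := by
  have : Monad.PreservesColimitOfIsReflexivePair (M : C ⥤ C) := ⟨fun _ _ f g h => hM f g h⟩
  exact ⟨M.hasReflexiveCoequalizers_algebra,
    fun _ _ f g _ => M.preservesColimitOfIsReflexivePair_forget.out f g⟩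
end

section
/- Let M be a monad on a cocomplete category C whose underlying endofunctor preserves coequalizers of reflexive pairs. Then the Eilenberg–Moore category Alg(M) of M-algebras is cocomplete (has all small colimits). -/
/-!
The forgetful functor `Alg(M) ⥤ C` creates every colimit that `M` preserves, so `Alg(M)` has
coequalizers of reflexive pairs. For colimits of shape `J`, the constant functor
`Alg(M) ⥤ (J ⥤ Alg(M))` composed with the forgetful functor `(J ⥤ Alg(M)) ⥤ (J ⥤ C)` is a right
adjoint because `C` has `J`-colimits. The latter forgetful functor has a left adjoint whose counit is
pointwise the Beck coequalizer of free algebras, hence a regular epimorphism, and the adjoint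
triangle theorem lifts the left adjoint to the constant functor itself.
-/

open CategoryTheory CategoryTheory.Limits

universe v u

variable {C : Type u} [Category.{v} C]

namespace CategoryTheory

section

universe v₁ v₂ v₃ u₁ u₂ u₃

variable {J : Type u₁} [Category.{v₁} J] {D : Type u₂} [Category.{v₂} D]

lemma Functor.map_isReflexivePair (F : C ⥤ D) {A B : C} {f g : A ⟶ B}
    (hfg : IsReflexivePair f g) : IsReflexivePair (F.map f) (F.map g) :=
  IsReflexivePair.mk' (F.map (commonSection f g)) (by simp [← F.map_comp])
    (by simp [← F.map_comp])

lemma Limits.hasColimit_of_isReflexivePair_s12 [HasReflexiveCoequalizers C]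
    (K : WalkingParallelPair ⥤ C)
    (hK : IsReflexivePair (K.map WalkingParallelPairHom.left) (K.map WalkingParallelPairHom.right)) :
    HasColimit K :=
  hasColimit_of_iso (diagramIsoParallelPair K)

lemma Limits.preservesColimit_of_isReflexivePair_s12 {G : C ⥤ D}
    (hG : ∀ ⦃A B : C⦄ (f g : A ⟶ B), IsReflexivePair f g → PreservesColimit (parallelPair f g) G)
    (K : WalkingParallelPair ⥤ C)
    (hK : IsReflexivePair (K.map WalkingParallelPairHom.left) (K.map WalkingParallelPairHom.right)) :
    PreservesColimit K G :=
  have := hG _ _ hK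
  preservesColimit_of_iso_diagram G (diagramIsoParallelPair K).symm

def NatTrans.regularEpiOfIsColimitCofork {X Y W : J ⥤ D} (l r : W ⟶ X) (π : X ⟶ Y)
    (w : l ≫ π = r ≫ π)
    (h : ∀ j, IsColimit (Cofork.ofπ (π.app j) (congr_app w j) : Cofork (l.app j) (r.app j))) :
    RegularEpi π where
  W := W
  left := l
  right := r
  w := w
  isColimit := evaluationJointlyReflectsColimits _ fun j =>
    (isColimitMapCoconeCoforkEquiv ((evaluation J D).obj j) w).symm (h j)

variable {E : Type u₃} [Category.{v₃} E] {F : D ⥤ E} {G : E ⥤ D}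

variable (J) in
/-- The counit of `adj.whiskerRight J` at `X` coequalizes the whiskered pair `(FGε, εFG)`. -/
def Adjunction.regularEpiWhiskerRightCounitApp (adj : F ⊣ G)
    (h : ∀ B, RegularEpi (adj.counit.app B)) (X : J ⥤ E) :
    RegularEpi ((adj.whiskerRight J).counit.app X) := by
  have hπ : (adj.whiskerRight J).counit.app X = Functor.whiskerLeft X adj.counit := by
    ext j; simp
  rw [hπ]
  exact NatTrans.regularEpiOfIsColimitCofork
    (Functor.whiskerLeft X (Functor.whiskerRight adj.counit (G ⋙ F)))
    (Functor.whiskerLeft X (Functor.whiskerLeft (G ⋙ F) adj.counit))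
    _ (by ext j; exact adj.counit_naturality _)
    fun j => LiftLeftAdjoint.counitCoequalises adj h (X.obj j)

end

namespace Monad

variable (M : Monad C)

def regularEpiAdjCounitApp (A : M.Algebra) : RegularEpi (M.adj.counit.app A) := by
  rw [adj_counit]
  exact ⟨_, _, _, _, beckAlgebraCoequalizer A⟩

lemma hasReflexiveCoequalizers_algebra_s12 [HasReflexiveCoequalizers C]
    (hM : ∀ ⦃A B : C⦄ (f g : A ⟶ B), IsReflexivePair f g →
      PreservesColimit (parallelPair f g) (M : C ⥤ C)) :
    HasReflexiveCoequalizers M.Algebra where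
  has_coeq _ _ f g hfg := by
    have hU := M.forget.map_isReflexivePair hfg
    have := hasColimit_of_isReflexivePair_s12 (parallelPair f g ⋙ M.forget) hU
    have := preservesColimit_of_isReflexivePair_s12 hM (parallelPair f g ⋙ M.forget) hU
    have := preservesColimit_of_isReflexivePair_s12 hM ((parallelPair f g ⋙ M.forget) ⋙ (M : C ⥤ C))
      ((M : C ⥤ C).map_isReflexivePair hU)
    exact hasColimit_of_created (parallelPair f g) M.forget

lemma hasColimitsOfShape_algebra (J : Type*) [Category* J] [HasColimitsOfShape J C]
    [HasReflexiveCoequalizers M.Algebra] : HasColimitsOfShape J M.Algebra := by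
  rw [hasColimitsOfShape_iff_isRightAdjoint_const]
  have : (Functor.const J : C ⥤ _).IsRightAdjoint := colimConstAdj.isRightAdjoint
  have : (Functor.const J ⋙ (Functor.whiskeringRight J _ _).obj M.forget).IsRightAdjoint :=
    Functor.isRightAdjoint_of_iso (Functor.compConstIso J M.forget)
  exact isRightAdjoint_triangle_lift (Functor.const J) (M.adj.whiskerRight J)
    (M.adj.regularEpiWhiskerRightCounitApp J M.regularEpiAdjCounitApp)

end Monad

end CategoryTheory

/-- if `C` is cocomplete and the monad `M` preserves coequalizers of
reflexive pairs, then the Eilenberg-Moore category of `M`-algebras is cocomplete. -/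
theorem algebra_hasColimits (M : Monad C) [HasColimits C]
    (hM : ∀ ⦃A B : C⦄ (f g : A ⟶ B), IsReflexivePair f g →
      PreservesColimit (parallelPair f g) (M : C ⥤ C)) :
    HasColimits M.Algebra := by
  have := M.hasReflexiveCoequalizers_algebra_s12 hM
  exact ⟨fun J _ => M.hasColimitsOfShape_algebra J⟩
end

section
/- Let Q, R, O be comonads on categories C, D, E respectively. Let B : C ⥤ D ⥤ E be a bifunctor equipped with a lift to coalgebras, i.e. a bifunctor B̃ : Coalg(Q) ⥤ Coalg(R) ⥤ Coalg(O) such that for every Q-coalgebra V and R-coalgebra W, the underlying object of B̃(V)(W) is B(U_Q V)(U_R W), compatibly with the forgetful functors on morphisms in both variables. Suppose that for every object X of C the functor B(X) : D ⥤ E has a right adjoint, that D has equalizers of coreflexive pairs, and that the underlying endofunctor of R preserves them. Then for every Q-coalgebra V, the lifted functor B̃(V) : Coalg(R) ⥤ Coalg(O) has a right adjoint. -/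
/-!
For a coalgebra `V`, the lifted functor `B̃(V)` sits in a commuting square
`B̃(V) ⋙ U_O = U_R ⋙ B(V)` in which `U_O` is comonadic and `U_R`, `B(V)` are left adjoints.
Since `R` preserves coreflexive equalizers, `U_R` creates them, so `Coalg(R)` has them, and the
adjoint lifting theorem produces the right adjoint of `B̃(V)`.
-/

open CategoryTheory CategoryTheory.Limits

universe v₁ v₂ v₃ u₁ u₂ u₃

namespace Paper

variable {C : Type u₁} [Category.{v₁} C] {D : Type u₂} [Category.{v₂} D]
  {E : Type u₃} [Category.{v₃} E]

theorem isCoreflexivePair_map (F : C ⥤ D) {A A' : C} (f g : A ⟶ A') [IsCoreflexivePair f g] :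
    IsCoreflexivePair (F.map f) (F.map g) :=
  IsCoreflexivePair.mk' (F.map (commonRetraction f g))
    (by rw [← F.map_comp, left_comp_retraction, F.map_id])
    (by rw [← F.map_comp, right_comp_retraction, F.map_id])

theorem preservesLimit_parallelPair_comp_of_isCoreflexivePair (G : C ⥤ D) (T : D ⥤ E)
    (hT : ∀ ⦃A A' : D⦄ (f g : A ⟶ A'), IsCoreflexivePair f g →
      PreservesLimit (parallelPair f g) T)
    {A A' : C} (f g : A ⟶ A') [IsCoreflexivePair f g] :
    PreservesLimit (parallelPair f g ⋙ G) T :=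
  have := hT _ _ (isCoreflexivePair_map G f g)
  preservesLimit_of_iso_diagram (K₁ := parallelPair (G.map f) (G.map g)) T
    (diagramIsoParallelPair (parallelPair f g ⋙ G)).symm

/-- `Comonad.forgetCreatesLimit` asks `R` to preserve the equalizer of the underlying pair and of
its image under `R`; both pairs are coreflexive. -/
theorem Comonad.hasCoreflexiveEqualizers_coalgebra (R : Comonad D) [HasCoreflexiveEqualizers D]
    (hR : ∀ ⦃A A' : D⦄ (f g : A ⟶ A'), IsCoreflexivePair f g →
      PreservesLimit (parallelPair f g) (R : D ⥤ D)) :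
    HasCoreflexiveEqualizers R.Coalgebra where
  has_eq V W f g _ := by
    have := preservesLimit_parallelPair_comp_of_isCoreflexivePair R.forget (R : D ⥤ D) hR f g
    have : PreservesLimit ((parallelPair f g ⋙ R.forget) ⋙ (R : D ⥤ D)) (R : D ⥤ D) :=
      preservesLimit_parallelPair_comp_of_isCoreflexivePair (R.forget ⋙ (R : D ⥤ D)) _ hR f g
    have : IsCoreflexivePair f.f g.f := isCoreflexivePair_map R.forget f g
    have : HasLimit (parallelPair f g ⋙ R.forget) :=
      hasLimit_of_iso (F := parallelPair f.f g.f)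
        (diagramIsoParallelPair (parallelPair f g ⋙ R.forget)).symm
    exact hasLimit_of_created (parallelPair f g) R.forget

/-- given a bifunctor `B : C ⥤ D ⥤ E` lifted to coalgebras over comonads
`Q`, `R`, `O`, if each `B(X)` has a right adjoint, `D` has coreflexive equalizers and `R`
preserves them, then each lifted functor `B̃(V)` has a right adjoint. -/
theorem lifted_bifunctor_isLeftAdjoint (Q : Comonad C) (R : Comonad D) (O : Comonad E)
    (B : C ⥤ D ⥤ E) (B' : Q.Coalgebra ⥤ R.Coalgebra ⥤ O.Coalgebra)
    (hB : B' ⋙ (Functor.whiskeringRight R.Coalgebra O.Coalgebra E).obj O.forget =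
      Q.forget ⋙ B ⋙ (Functor.whiskeringLeft R.Coalgebra D E).obj R.forget)
    (hadj : ∀ X : C, (B.obj X).IsLeftAdjoint)
    [HasCoreflexiveEqualizers D]
    (hR : ∀ ⦃A A' : D⦄ (f g : A ⟶ A'), IsCoreflexivePair f g →
      PreservesLimit (parallelPair f g) (R : D ⥤ D)) :
    ∀ V : Q.Coalgebra, (B'.obj V).IsLeftAdjoint := by
  intro V
  have := Comonad.hasCoreflexiveEqualizers_coalgebra R hR
  have := hadj V.A
  have hV : R.forget ⋙ B.obj V.A = B'.obj V ⋙ O.forget := (congrArg (·.obj V) hB).symm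
  exact isLeftAdjoint_square_lift_comonadic (B'.obj V) O.forget R.forget (B.obj V.A) (eqToIso hV)

end Paper
end
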